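/- Let η ∈ ℝ, η ≠ 0, and let z, ρ : ℝ² → ℝ be smooth (C^∞) functions of (x,t) satisfying the short-pulse equation z_xt = (1/2) z² z_xx + z z_x² + z together with the Riccati system ρ_x = −(z_x/(4η)) ρ² + (1/(2η)) ρ + z_x/(4η) and ρ_t = −(z(z z_x + 4η)/(8η)) ρ² + ((8η² + z²)/(4η)) ρ − z(−z z_x + 4η)/(8η). Define ξ(x,t) := x + 8η/(ρ(x,t)² + 1), and suppose w : ℝ² → ℝ is a smooth function such that w(ξ(x,t), t) = −z(x,t) + 8η ρ(x,t)/(ρ(x,t)² + 1) for all (x,t) and such that ∂_x ξ(x,t) ≠ 0 for all (x,t). Then at every point of the form (ξ(x,t), t), the function w satisfies the short-pulse equation w_xt = (1/2) w² w_xx + w w_x² + w. -/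

import Mathlib

/-- Partial derivative in the first variable `x`. -/
noncomputable def px (f : ℝ → ℝ → ℝ) : ℝ → ℝ → ℝ := fun x t => deriv (fun y => f y t) x

/-- Partial derivative in the second variable `t`. -/
noncomputable def pt (f : ℝ → ℝ → ℝ) : ℝ → ℝ → ℝ := fun x t => deriv (fun s => f x s) t

/-!
Put `W(x,t) = w(ξ(x,t),t)` and `P(x,t) = w_x(ξ(x,t),t)`. The chain rule gives `W_x = P ξ_x`,
`P_x = w_xx(ξ,t) ξ_x` and `P_t = w_xx(ξ,t) ξ_t + w_xt(ξ,t)`, so `ξ_x` times the short-pulse residual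
of `w` at `(ξ,t)` is `ξ_x P_t - (ξ_t + W²/2) P_x - ξ_x W (1 + P²)`.

The Riccati system makes `ξ_x` and `W_x` rational in `(z_x, ρ)`: `P = Im u / Re u` with
`u = (1 + i z_x)(1 + i ρ)⁴`, i.e. `P = tan (arctan z_x + 4 arctan ρ)`; it also gives
`ξ_t + W²/2 = z² ξ_x / 2`. For the characteristic derivative `L = ∂_t - (z²/2) ∂_x` the short-pulse
equation says `L z_x = z (1 + z_x²)` and the Riccati system says `L ρ = 2ηρ - z (1 + ρ²)/2`, whence
`L P = W (1 + P²)` and the residual vanishes.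
-/

open Function

section PartialDerivatives

variable {f : ℝ → ℝ → ℝ} {x t : ℝ}

theorem hasDerivAt_px (hf : DifferentiableAt ℝ (uncurry f) (x, t)) :
    HasDerivAt (fun y => f y t) (px f x t) x :=
  (hf.comp (f := fun y => (y, t)) x
    (differentiableAt_id.prodMk (differentiableAt_const t))).hasDerivAt

theorem hasDerivAt_pt (hf : DifferentiableAt ℝ (uncurry f) (x, t)) :
    HasDerivAt (fun s => f x s) (pt f x t) t :=
  (hf.comp (f := fun s => (x, s)) t
    ((differentiableAt_const x).prodMk differentiableAt_id)).hasDerivAt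

theorem px_eq_fderiv (hf : DifferentiableAt ℝ (uncurry f) (x, t)) :
    px f x t = fderiv ℝ (uncurry f) (x, t) (1, 0) :=
  (hf.hasFDerivAt.comp_hasDerivAt (f := fun y => (y, t)) x
    ((hasDerivAt_id x).prodMk (hasDerivAt_const x t))).deriv

theorem pt_eq_fderiv (hf : DifferentiableAt ℝ (uncurry f) (x, t)) :
    pt f x t = fderiv ℝ (uncurry f) (x, t) (0, 1) :=
  (hf.hasFDerivAt.comp_hasDerivAt (f := fun s => (x, s)) t
    ((hasDerivAt_const t x).prodMk (hasDerivAt_id t))).deriv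

theorem contDiff_px {m n : WithTop ℕ∞} (hf : ContDiff ℝ n (uncurry f)) (hmn : m + 1 ≤ n) :
    ContDiff ℝ m (uncurry (px f)) := by
  have hd : Differentiable ℝ (uncurry f) :=
    hf.differentiable (ne_of_gt (lt_of_lt_of_le (by simp) hmn))
  rw [show uncurry (px f) = fun p => fderiv ℝ (uncurry f) p (1, 0) from
    funext fun p => px_eq_fderiv (hd p)]
  exact (hf.fderiv_right hmn).clm_apply contDiff_const

theorem px_comp {g ξ : ℝ → ℝ → ℝ} (hg : DifferentiableAt ℝ (uncurry g) (ξ x t, t))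
    (hξ : DifferentiableAt ℝ (uncurry ξ) (x, t)) :
    px (fun x t => g (ξ x t) t) x t = px g (ξ x t) t * px ξ x t :=
  ((hasDerivAt_px hg).comp (h₂ := fun y => g y t) x (hasDerivAt_px hξ)).deriv

theorem pt_comp {g ξ : ℝ → ℝ → ℝ} (hg : DifferentiableAt ℝ (uncurry g) (ξ x t, t))
    (hξ : DifferentiableAt ℝ (uncurry ξ) (x, t)) :
    pt (fun x t => g (ξ x t) t) x t = px g (ξ x t) t * pt ξ x t + pt g (ξ x t) t := by
  have h := hg.hasFDerivAt.comp_hasDerivAt (f := fun s => (ξ x s, s)) t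
    ((hasDerivAt_pt hξ).prodMk (hasDerivAt_id t))
  have hv : (pt ξ x t, (1 : ℝ)) = pt ξ x t • ((1 : ℝ), (0 : ℝ)) + ((0 : ℝ), (1 : ℝ)) := by simp
  rw [hv, map_add, map_smul, ← px_eq_fderiv hg, ← pt_eq_fderiv hg, smul_eq_mul, mul_comm] at h
  exact h.deriv

end PartialDerivatives

noncomputable def shortPulseResidual (w : ℝ → ℝ → ℝ) (x t : ℝ) : ℝ :=
  pt (px w) x t - (1 / 2 * w x t ^ 2 * px (px w) x t + w x t * px w x t ^ 2 + w x t)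

theorem px_mul_shortPulseResidual_comp {w ξ : ℝ → ℝ → ℝ} {x t : ℝ}
    (hw : DifferentiableAt ℝ (uncurry (px w)) (ξ x t, t))
    (hξ : DifferentiableAt ℝ (uncurry ξ) (x, t)) :
    px ξ x t * shortPulseResidual w (ξ x t) t
      = px ξ x t * pt (fun x t => px w (ξ x t) t) x t
        - (pt ξ x t + 1 / 2 * w (ξ x t) t ^ 2) * px (fun x t => px w (ξ x t) t) x t
        - px ξ x t * w (ξ x t) t * (1 + px w (ξ x t) t ^ 2) := by
  rw [shortPulseResidual, px_comp hw hξ, pt_comp hw hξ]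
  ring

/-- `backlundRe p r + backlundIm p r * I = (1 + p * I) * (1 + r * I) ^ 4`. -/
def backlundRe (p r : ℝ) : ℝ := (1 - r ^ 2) ^ 2 - 4 * r ^ 2 - p * (4 * r * (1 - r ^ 2))

def backlundIm (p r : ℝ) : ℝ := p * ((1 - r ^ 2) ^ 2 - 4 * r ^ 2) + 4 * r * (1 - r ^ 2)

theorem HasDerivAt.backlundIm_div_backlundRe {p r : ℝ → ℝ} {p' r' s : ℝ} (hp : HasDerivAt p p' s)
    (hr : HasDerivAt r r' s) (hd : backlundRe (p s) (r s) ≠ 0) :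
    HasDerivAt (fun s => backlundIm (p s) (r s) / backlundRe (p s) (r s))
      (((r s ^ 2 + 1) ^ 4 * p' + 4 * (r s ^ 2 + 1) ^ 3 * (p s ^ 2 + 1) * r')
        / backlundRe (p s) (r s) ^ 2) s := by
  have hc := (((hr.pow 2).const_sub 1).pow 2).sub ((hr.pow 2).const_mul 4)
  have hs := (hr.const_mul 4).mul ((hr.pow 2).const_sub 1)
  have hRe : HasDerivAt (fun s => backlundRe (p s) (r s)) _ s := hc.sub (hp.mul hs)
  have hIm : HasDerivAt (fun s => backlundIm (p s) (r s)) _ s := (hp.mul hc).add hs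
  refine (hIm.div hRe hd).congr_deriv (congrArg (· / _) ?_)
  simp only [Pi.pow_apply, Pi.sub_apply]
  unfold backlundRe backlundIm
  ring

theorem HasDerivAt.const_div_sq_add_one {r : ℝ → ℝ} {r' s : ℝ} (c : ℝ) (hr : HasDerivAt r r' s) :
    HasDerivAt (fun s => c / (r s ^ 2 + 1)) (-(2 * c * r s * r') / (r s ^ 2 + 1) ^ 2) s := by
  refine ((hasDerivAt_const s c).div ((hr.pow 2).add_const 1)
    (by positivity : r s ^ 2 + 1 ≠ 0)).congr_deriv ?_
  simp only [Pi.pow_apply]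
  ring

theorem HasDerivAt.const_mul_div_sq_add_one {r : ℝ → ℝ} {r' s : ℝ} (c : ℝ)
    (hr : HasDerivAt r r' s) :
    HasDerivAt (fun s => c * r s / (r s ^ 2 + 1))
      (c * (1 - r s ^ 2) * r' / (r s ^ 2 + 1) ^ 2) s := by
  refine ((hr.const_mul c).div ((hr.pow 2).add_const 1)
    (by positivity : r s ^ 2 + 1 ≠ 0)).congr_deriv ?_
  simp only [Pi.pow_apply]
  ring

noncomputable section

def backlundCoord (η : ℝ) (ρ : ℝ → ℝ → ℝ) : ℝ → ℝ → ℝ := fun x t => x + 8 * η / (ρ x t ^ 2 + 1)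

def backlundField (η : ℝ) (z ρ : ℝ → ℝ → ℝ) : ℝ → ℝ → ℝ :=
  fun x t => -z x t + 8 * η * ρ x t / (ρ x t ^ 2 + 1)

def backlundSlope (z ρ : ℝ → ℝ → ℝ) : ℝ → ℝ → ℝ :=
  fun x t => backlundIm (px z x t) (ρ x t) / backlundRe (px z x t) (ρ x t)

structure IsRiccatiCovering (η : ℝ) (z ρ : ℝ → ℝ → ℝ) : Prop where
  px_eq : ∀ x t, px ρ x t
    = -(px z x t / (4 * η)) * ρ x t ^ 2 + 1 / (2 * η) * ρ x t + px z x t / (4 * η)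
  pt_eq : ∀ x t, pt ρ x t
    = -(z x t * (z x t * px z x t + 4 * η) / (8 * η)) * ρ x t ^ 2
      + (8 * η ^ 2 + z x t ^ 2) / (4 * η) * ρ x t - z x t * (-z x t * px z x t + 4 * η) / (8 * η)

end

section Backlund

variable {η : ℝ} {z ρ : ℝ → ℝ → ℝ} {x t : ℝ}

theorem differentiableAt_backlundCoord (hρ : DifferentiableAt ℝ (uncurry ρ) (x, t)) :
    DifferentiableAt ℝ (uncurry (backlundCoord η ρ)) (x, t) := by
  show DifferentiableAt ℝ (fun p : ℝ × ℝ => p.1 + 8 * η / (uncurry ρ p ^ 2 + 1)) (x, t)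
  fun_prop (disch := positivity)

theorem px_backlundCoord (hρ : DifferentiableAt ℝ (uncurry ρ) (x, t)) :
    px (backlundCoord η ρ) x t = 1 - 16 * η * ρ x t * px ρ x t / (ρ x t ^ 2 + 1) ^ 2 := by
  refine (((hasDerivAt_id x).add
    ((hasDerivAt_px hρ).const_div_sq_add_one (8 * η))).congr_deriv ?_).deriv
  ring

theorem pt_backlundCoord (hρ : DifferentiableAt ℝ (uncurry ρ) (x, t)) :
    pt (backlundCoord η ρ) x t = -(16 * η * ρ x t * pt ρ x t) / (ρ x t ^ 2 + 1) ^ 2 := by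
  refine (((hasDerivAt_const t x).add
    ((hasDerivAt_pt hρ).const_div_sq_add_one (8 * η))).congr_deriv ?_).deriv
  ring

theorem px_backlundField (hz : DifferentiableAt ℝ (uncurry z) (x, t))
    (hρ : DifferentiableAt ℝ (uncurry ρ) (x, t)) :
    px (backlundField η z ρ) x t
      = -px z x t + 8 * η * (1 - ρ x t ^ 2) * px ρ x t / (ρ x t ^ 2 + 1) ^ 2 :=
  ((hasDerivAt_px hz).neg.add ((hasDerivAt_px hρ).const_mul_div_sq_add_one (8 * η))).deriv

namespace IsRiccatiCovering

theorem pt_sub_px (h : IsRiccatiCovering η z ρ) (hη : η ≠ 0) (x t : ℝ) :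
    pt ρ x t - 1 / 2 * z x t ^ 2 * px ρ x t
      = 2 * η * ρ x t - 1 / 2 * z x t * (ρ x t ^ 2 + 1) := by
  rw [h.px_eq, h.pt_eq]
  field_simp
  ring

theorem px_backlundCoord_eq (h : IsRiccatiCovering η z ρ) (hη : η ≠ 0)
    (hρ : DifferentiableAt ℝ (uncurry ρ) (x, t)) :
    px (backlundCoord η ρ) x t = backlundRe (px z x t) (ρ x t) / (ρ x t ^ 2 + 1) ^ 2 := by
  rw [px_backlundCoord hρ, h.px_eq, backlundRe]
  field_simp
  ring

theorem px_backlundField_eq (h : IsRiccatiCovering η z ρ) (hη : η ≠ 0)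
    (hz : DifferentiableAt ℝ (uncurry z) (x, t)) (hρ : DifferentiableAt ℝ (uncurry ρ) (x, t)) :
    px (backlundField η z ρ) x t = backlundIm (px z x t) (ρ x t) / (ρ x t ^ 2 + 1) ^ 2 := by
  rw [px_backlundField hz hρ, h.px_eq, backlundIm]
  field_simp
  ring

theorem pt_backlundCoord_add (h : IsRiccatiCovering η z ρ) (hη : η ≠ 0)
    (hρ : DifferentiableAt ℝ (uncurry ρ) (x, t)) :
    pt (backlundCoord η ρ) x t + 1 / 2 * backlundField η z ρ x t ^ 2
      = 1 / 2 * z x t ^ 2 * px (backlundCoord η ρ) x t := by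
  rw [px_backlundCoord hρ, pt_backlundCoord hρ, backlundField]
  linear_combination (norm := skip) -(16 * η * ρ x t / (ρ x t ^ 2 + 1) ^ 2) * h.pt_sub_px hη x t
  field_simp
  ring

theorem px_eq_backlundSlope (h : IsRiccatiCovering η z ρ) (hη : η ≠ 0) {w : ℝ → ℝ → ℝ}
    (hwz : ∀ x t, w (backlundCoord η ρ x t) t = backlundField η z ρ x t)
    (hw : DifferentiableAt ℝ (uncurry w) (backlundCoord η ρ x t, t))
    (hz : DifferentiableAt ℝ (uncurry z) (x, t)) (hρ : DifferentiableAt ℝ (uncurry ρ) (x, t))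
    (hd : backlundRe (px z x t) (ρ x t) ≠ 0) :
    px w (backlundCoord η ρ x t) t = backlundSlope z ρ x t := by
  have hchain := px_comp hw (differentiableAt_backlundCoord hρ)
  rw [funext₂ hwz, h.px_backlundField_eq hη hz hρ, h.px_backlundCoord_eq hη hρ] at hchain
  rw [backlundSlope, eq_div_iff hd]
  field_simp at hchain
  linarith

theorem pt_sub_px_backlundSlope (h : IsRiccatiCovering η z ρ) (hη : η ≠ 0)
    (hsp : pt (px z) x t
      = 1 / 2 * z x t ^ 2 * px (px z) x t + z x t * px z x t ^ 2 + z x t)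
    (hzx : DifferentiableAt ℝ (uncurry (px z)) (x, t))
    (hρ : DifferentiableAt ℝ (uncurry ρ) (x, t)) (hd : backlundRe (px z x t) (ρ x t) ≠ 0) :
    pt (backlundSlope z ρ) x t - 1 / 2 * z x t ^ 2 * px (backlundSlope z ρ) x t
      = backlundField η z ρ x t * (1 + backlundSlope z ρ x t ^ 2) := by
  have hSx : px (backlundSlope z ρ) x t = _ :=
    ((hasDerivAt_px hzx).backlundIm_div_backlundRe (hasDerivAt_px hρ) hd).deriv
  have hSt : pt (backlundSlope z ρ) x t = _ :=
    ((hasDerivAt_pt hzx).backlundIm_div_backlundRe (hasDerivAt_pt hρ) hd).deriv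
  rw [hSx, hSt, hsp, backlundField, backlundSlope]
  linear_combination (norm := skip)
    4 * (ρ x t ^ 2 + 1) ^ 3 * (px z x t ^ 2 + 1) / backlundRe (px z x t) (ρ x t) ^ 2
      * h.pt_sub_px hη x t
  field_simp
  rw [backlundRe, backlundIm]
  ring

end IsRiccatiCovering

end Backlund

/-- the auto-Bäcklund transformation
`x' = x + 8η/(ρ²+1)`, `t' = t`, `z' = −z + 8ηρ/(ρ²+1)` of the short-pulse equation
`z_xt = (1/2)z²z_xx + zz_x² + z`: if `w` is a smooth function matching `z'` along
the transformed variable `ξ = x + 8η/(ρ²+1)` with `∂_x ξ ≠ 0`, then `w` satisfies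
the short-pulse equation at every point `(ξ(x,t), t)`. -/
theorem short_pulse_auto_backlund (η : ℝ) (hη : η ≠ 0) (z ρ w : ℝ → ℝ → ℝ)
    (hz : ContDiff ℝ (⊤ : ℕ∞) (Function.uncurry z))
    (hρ : ContDiff ℝ (⊤ : ℕ∞) (Function.uncurry ρ))
    (hw : ContDiff ℝ (⊤ : ℕ∞) (Function.uncurry w))
    (hsp : ∀ x t, pt (px z) x t
      = (1 / 2) * (z x t) ^ 2 * px (px z) x t + z x t * (px z x t) ^ 2 + z x t)
    (hρx : ∀ x t, px ρ x t
      = -(px z x t / (4 * η)) * (ρ x t) ^ 2 + (1 / (2 * η)) * ρ x t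
        + px z x t / (4 * η))
    (hρt : ∀ x t, pt ρ x t
      = -(z x t * (z x t * px z x t + 4 * η) / (8 * η)) * (ρ x t) ^ 2
        + ((8 * η ^ 2 + (z x t) ^ 2) / (4 * η)) * ρ x t
        - z x t * (-(z x t) * px z x t + 4 * η) / (8 * η))
    (ξ : ℝ → ℝ → ℝ)
    (hξ : ∀ x t, ξ x t = x + 8 * η / ((ρ x t) ^ 2 + 1))
    (hwz : ∀ x t, w (ξ x t) t = -(z x t) + 8 * η * ρ x t / ((ρ x t) ^ 2 + 1))
    (hreg : ∀ x t, px ξ x t ≠ 0) :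
    ∀ x t,
      pt (px w) (ξ x t) t
        = (1 / 2) * (w (ξ x t) t) ^ 2 * px (px w) (ξ x t) t
          + w (ξ x t) t * (px w (ξ x t) t) ^ 2 + w (ξ x t) t := by
  obtain rfl : ξ = backlundCoord η ρ := funext₂ hξ
  have hcov : IsRiccatiCovering η z ρ := ⟨hρx, hρt⟩
  have hW : ∀ x t, w (backlundCoord η ρ x t) t = backlundField η z ρ x t := hwz
  have htop : (2 : WithTop ℕ∞) ≤ ((⊤ : ℕ∞) : WithTop ℕ∞) := WithTop.coe_le_coe.mpr le_top
  have hz' := hz.differentiable (by simp)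
  have hρ' := hρ.differentiable (by simp)
  have hw' := hw.differentiable (by simp)
  have hzx := (contDiff_px hz htop).differentiable one_ne_zero
  have hwx := (contDiff_px hw htop).differentiable one_ne_zero
  have hRe : ∀ x t, backlundRe (px z x t) (ρ x t) ≠ 0 := fun x t hre =>
    hreg x t (by rw [hcov.px_backlundCoord_eq hη (hρ' _), hre, zero_div])
  have hslope : ∀ x t, px w (backlundCoord η ρ x t) t = backlundSlope z ρ x t := fun x t =>
    hcov.px_eq_backlundSlope hη hW (hw' _) (hz' _) (hρ' _) (hRe x t)
  intro x t
  have hres := px_mul_shortPulseResidual_comp (hwx _)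
    (differentiableAt_backlundCoord (η := η) (hρ' (x, t)))
  rw [funext₂ hslope, hslope, hW, hcov.pt_backlundCoord_add hη (hρ' _)] at hres
  have hzero : px (backlundCoord η ρ) x t * shortPulseResidual w (backlundCoord η ρ x t) t = 0 := by
    linear_combination hres + px (backlundCoord η ρ) x t
      * hcov.pt_sub_px_backlundSlope hη (hsp x t) (hzx _) (hρ' _) (hRe x t)
  exact sub_eq_zero.mp ((mul_eq_zero.mp hzero).resolve_left (hreg x t))
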